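/- arXiv:2208.01822 — 3 statements merged into one kernel-verified Lean document; each statement's English description precedes it below -/
import Mathlib

section
/- Let V : [0,∞) → [0,∞) and ζ : [0,∞) → [0,∞) be continuously differentiable functions, let ψ : [0,∞) → [ψ̲, ψ̄] be a function whose values lie in an interval [ψ̲, ψ̄] with ψ̲·ψ̄ > 0, let ι be a real constant, and let ħ be a BL-type Nussbaum function with constant L > max{ψ̲/ψ̄, ψ̄/ψ̲}. If for all t ≥ 0 one has V′(t) ≤ (ψ(t)·ħ(ζ(t)) + ι)·ζ′(t) and ζ′(t) ≥ 0, then both V and ζ are bounded on [0,∞). -/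
/-!
Let `P`, `N` be the primitives of `ħ⁺`, `ħ⁻` and `F(z) = ψ̄ P(z) − ψ̲ N(z) + ι z`. Since
`ψ ħ ≤ ψ̄ ħ⁺ − ψ̲ ħ⁻` and `ζ′ ≥ 0`, the differential inequality makes `V − F ∘ ζ` antitone, so
`V(t) ≤ C₀ + F(ζ(t))` with `C₀ = V(0) − F(ζ(0))`. If `ζ` were unbounded it would sweep out
`[ζ(0), ∞)`, and `V ≥ 0` would give `F ≥ −C₀` there; but that forces the ratio `N/P` (or `P/N`,
when `ψ < 0`) to be eventually at most `ψ̄/ψ̲` (or `ψ̲/ψ̄`), against the limsup condition `≥ L`.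
Once `ζ` is bounded, so is `F ∘ ζ`, hence `V`.
-/

open Filter

/-- The positive part `ħ⁺(ζ) = max {0, ħ(ζ)}`. -/
noncomputable def nussPos (h : ℝ → ℝ) (ζ : ℝ) : ℝ := max 0 (h ζ)

/-- The negative part `ħ⁻(ζ) = max {0, −ħ(ζ)}`. -/
noncomputable def nussNeg (h : ℝ → ℝ) (ζ : ℝ) : ℝ := max 0 (-h ζ)

/-- A continuously differentiable function `ħ : [0,∞) → ℝ` is a *BL-type Nussbaum
function* with constant `L > 1` if
`lim_{ζ→∞} (1/ζ)∫₀^ζ ħ⁺ = ∞`, `lim_{ζ→∞} (1/ζ)∫₀^ζ ħ⁻ = ∞`,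
`limsup_{ζ→∞} (∫₀^ζ ħ⁺)/(∫₀^ζ ħ⁻) ≥ L` and `limsup_{ζ→∞} (∫₀^ζ ħ⁻)/(∫₀^ζ ħ⁺) ≥ L`
(the limsups are taken in the extended reals so that `≥ L` is meaningful even when
the ratios are unbounded). -/
def IsBLNussbaum (h : ℝ → ℝ) (L : ℝ) : Prop :=
  1 < L ∧ ContDiff ℝ 1 h ∧
  Tendsto (fun ζ => (∫ τ in (0:ℝ)..ζ, nussPos h τ) / ζ) atTop atTop ∧
  Tendsto (fun ζ => (∫ τ in (0:ℝ)..ζ, nussNeg h τ) / ζ) atTop atTop ∧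
  (L : EReal) ≤ limsup (fun ζ =>
      (((∫ τ in (0:ℝ)..ζ, nussPos h τ) / (∫ τ in (0:ℝ)..ζ, nussNeg h τ) : ℝ) : EReal)) atTop ∧
  (L : EReal) ≤ limsup (fun ζ =>
      (((∫ τ in (0:ℝ)..ζ, nussNeg h τ) / (∫ τ in (0:ℝ)..ζ, nussPos h τ) : ℝ) : EReal)) atTop

open Set

/-- `nussMajorant h ψ̲ ψ̄ ι` is the `F` of the proof sketch. -/
noncomputable def nussMajorant (h : ℝ → ℝ) (a b c z : ℝ) : ℝ :=
  b * (∫ τ in (0:ℝ)..z, nussPos h τ) - a * (∫ τ in (0:ℝ)..z, nussNeg h τ) + c * z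

lemma continuous_nussPos {h : ℝ → ℝ} (hh : Continuous h) : Continuous (nussPos h) :=
  continuous_const.max hh

lemma continuous_nussNeg {h : ℝ → ℝ} (hh : Continuous h) : Continuous (nussNeg h) :=
  continuous_const.max hh.neg

lemma hasDerivAt_nussMajorant {h : ℝ → ℝ} (hh : Continuous h) (a b c z : ℝ) :
    HasDerivAt (nussMajorant h a b c) (b * nussPos h z - a * nussNeg h z + c) z := by
  have hP := ((continuous_nussPos hh).integral_hasStrictDerivAt 0 z).hasDerivAt
  have hN := ((continuous_nussNeg hh).integral_hasStrictDerivAt 0 z).hasDerivAt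
  exact ((hP.const_mul b).sub (hN.const_mul a)).add
    ((hasDerivAt_id' z).const_mul c |>.congr_deriv (mul_one c))

lemma continuous_nussMajorant {h : ℝ → ℝ} (hh : Continuous h) (a b c : ℝ) :
    Continuous (nussMajorant h a b c) :=
  continuous_iff_continuousAt.mpr fun z => (hasDerivAt_nussMajorant hh a b c z).continuousAt

lemma mul_le_nussPos_sub_nussNeg {h : ℝ → ℝ} {a b ψ : ℝ} (hψ : ψ ∈ Icc a b) (z : ℝ) :
    ψ * h z ≤ b * nussPos h z - a * nussNeg h z := by
  obtain ⟨ha, hb⟩ := hψ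
  rcases le_total 0 (h z) with hz | hz
  · rw [nussPos, nussNeg, max_eq_right hz, max_eq_left (neg_nonpos.mpr hz)]
    nlinarith
  · rw [nussPos, nussNeg, max_eq_left hz, max_eq_right (neg_nonneg.mpr hz)]
    nlinarith

lemma antitoneOn_sub_comp_of_deriv_le {s : Set ℝ} (hs : Convex ℝ s) {V ζ G g : ℝ → ℝ}
    (hV : Differentiable ℝ V) (hζ : Differentiable ℝ ζ) (hG : ∀ z, HasDerivAt G (g z) z)
    (hle : ∀ t ∈ s, deriv V t ≤ g (ζ t) * deriv ζ t) :
    AntitoneOn (fun t => V t - G (ζ t)) s := by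
  have hD : ∀ t, HasDerivAt (fun t => V t - G (ζ t)) (deriv V t - g (ζ t) * deriv ζ t) t :=
    fun t => (hV t).hasDerivAt.sub ((hG (ζ t)).comp t (hζ t).hasDerivAt)
  apply antitoneOn_of_deriv_nonpos hs
  · exact (continuous_iff_continuousAt.mpr fun t => (hD t).continuousAt).continuousOn
  · exact fun t _ => (hD t).differentiableAt.differentiableWithinAt
  · intro t ht
    rw [(hD t).deriv]
    linarith [hle t (interior_subset ht)]

lemma eventually_div_le_of_le_mul_add {P N : ℝ → ℝ} {a b c C r : ℝ} (ha : 0 < a)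
    (hP : Tendsto (fun z => P z / z) atTop atTop)
    (hle : ∀ᶠ z in atTop, a * N z ≤ b * P z + c * z + C) (hr : b / a < r) :
    ∀ᶠ z in atTop, N z / P z ≤ r := by
  have hδ : 0 < a * r - b := by rw [div_lt_iff₀ ha] at hr; linarith
  set K := (|c| + |C| + 1) / (a * r - b)
  filter_upwards [hle, hP.eventually_ge_atTop K, eventually_ge_atTop 1] with z hz hKz hz1
  have hz0 : 0 < z := zero_lt_one.trans_le hz1
  -- `P` outgrows every linear function, so it absorbs the affine error `c z + C`.
  have hPz : (|c| + |C| + 1) * z ≤ (a * r - b) * P z := by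
    rw [le_div_iff₀ hz0, div_mul_eq_mul_div, div_le_iff₀ hδ] at hKz
    linarith
  have hP0 : 0 < P z :=
    pos_of_mul_pos_right ((by positivity : (0:ℝ) < (|c| + |C| + 1) * z).trans_le hPz) hδ.le
  have hcC : c * z + C ≤ (|c| + |C|) * z := by
    nlinarith [le_abs_self c, le_abs_self C, abs_nonneg C]
  rw [div_le_iff₀ hP0]
  nlinarith

lemma limsup_div_lt_of_le_mul_add {P N : ℝ → ℝ} {a b c C L : ℝ} (ha : 0 < a)
    (hP : Tendsto (fun z => P z / z) atTop atTop)
    (hle : ∀ᶠ z in atTop, a * N z ≤ b * P z + c * z + C) (hL : b / a < L) :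
    limsup (fun z => ((N z / P z : ℝ) : EReal)) atTop < L := by
  have hmid : b / a < (b / a + L) / 2 := by linarith
  have hev := eventually_div_le_of_le_mul_add ha hP hle hmid
  calc limsup (fun z => ((N z / P z : ℝ) : EReal)) atTop
      ≤ (((b / a + L) / 2 : ℝ) : EReal) :=
        limsup_le_of_le (by isBoundedDefault) (hev.mono fun z hz => EReal.coe_le_coe hz)
    _ < L := EReal.coe_lt_coe (by linarith)

lemma frequently_nussMajorant_lt {h : ℝ → ℝ} {a b c L : ℝ} (hNuss : IsBLNussbaum h L)
    (hab : 0 < a * b) (hL : max (a / b) (b / a) < L) (C : ℝ) :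
    ∃ᶠ z in atTop, nussMajorant h a b c z < C := by
  obtain ⟨-, -, hP, hN, hPN, hNP⟩ := hNuss
  by_contra hF
  have hge : ∀ᶠ z in atTop, C ≤ nussMajorant h a b c z := by
    simpa only [not_frequently, not_lt] using hF
  rcases lt_or_gt_of_ne (left_ne_zero_of_mul hab.ne') with ha | ha
  · refine (limsup_div_lt_of_le_mul_add (a := -b) (b := -a) (c := c) (C := -C) (by nlinarith)
      hN ?_ ?_).not_ge hPN
    · exact hge.mono fun z hz => by unfold nussMajorant at hz; linarith
    · rw [neg_div_neg_eq]; exact (le_max_left _ _).trans_lt hL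
  · refine (limsup_div_lt_of_le_mul_add (c := c) (C := -C) ha hP ?_
      ((le_max_right _ _).trans_lt hL)).not_ge hNP
    exact hge.mono fun z hz => by unfold nussMajorant at hz; linarith

theorem bl_nussbaum_lemma_general
    (V ζ ψ h : ℝ → ℝ) (ψlo ψhi ι L : ℝ)
    (hV_smooth : ContDiff ℝ 1 V) (hζ_smooth : ContDiff ℝ 1 ζ)
    (hV_nonneg : ∀ t, 0 ≤ t → 0 ≤ V t)
    (hψ : ∀ t, 0 ≤ t → ψ t ∈ Set.Icc ψlo ψhi)
    (hψprod : 0 < ψlo * ψhi)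
    (hL : max (ψlo / ψhi) (ψhi / ψlo) < L)
    (hNuss : IsBLNussbaum h L)
    (hineq : ∀ t, 0 ≤ t → deriv V t ≤ (ψ t * h (ζ t) + ι) * deriv ζ t)
    (hζ_mono : ∀ t, 0 ≤ t → 0 ≤ deriv ζ t) :
    (∃ C : ℝ, ∀ t, 0 ≤ t → V t ≤ C) ∧ (∃ C : ℝ, ∀ t, 0 ≤ t → ζ t ≤ C) := by
  have hh : Continuous h := hNuss.2.1.continuous
  have hζ : Differentiable ℝ ζ := hζ_smooth.differentiable one_ne_zero
  set F := nussMajorant h ψlo ψhi ι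
  set C₀ := V 0 - F (ζ 0)
  have hVF : ∀ t, 0 ≤ t → V t ≤ C₀ + F (ζ t) := by
    have hanti := antitoneOn_sub_comp_of_deriv_le (convex_Ici 0)
      (hV_smooth.differentiable one_ne_zero) hζ (hasDerivAt_nussMajorant hh ψlo ψhi ι)
      fun t (ht : 0 ≤ t) => (hineq t ht).trans (mul_le_mul_of_nonneg_right
        (by linarith [mul_le_nussPos_sub_nussNeg (h := h) (hψ t ht) (ζ t)]) (hζ_mono t ht))
    intro t ht
    linarith [hanti self_mem_Ici (mem_Ici.mpr ht) ht]
  have hζ_bdd : ∃ Z, ∀ t, 0 ≤ t → ζ t ≤ Z := by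
    by_contra! hunb
    obtain ⟨z, hFz, hz⟩ := ((frequently_nussMajorant_lt hNuss hψprod hL (-C₀)).and_eventually
      (eventually_ge_atTop (ζ 0))).exists
    obtain ⟨t, ht, hzt⟩ := hunb z
    obtain ⟨s, hs, rfl⟩ := intermediate_value_Icc ht hζ.continuous.continuousOn ⟨hz, hzt.le⟩
    linarith [hVF s hs.1, hV_nonneg s hs.1]
  obtain ⟨Z, hZ⟩ := hζ_bdd
  have hζ_ge : ∀ t, 0 ≤ t → ζ 0 ≤ ζ t := fun t ht =>
    monotoneOn_of_deriv_nonneg (convex_Ici 0) hζ.continuous.continuousOn hζ.differentiableOn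
      (fun x hx => hζ_mono x (interior_subset hx)) self_mem_Ici (mem_Ici.mpr ht) ht
  obtain ⟨M, hM⟩ := isCompact_Icc.bddAbove_image
    (K := Icc (ζ 0) Z) (continuous_nussMajorant hh ψlo ψhi ι).continuousOn
  exact ⟨⟨C₀ + M, fun t ht => (hVF t ht).trans
    (by linarith [hM (mem_image_of_mem F ⟨hζ_ge t ht, hZ t ht⟩)])⟩, ⟨Z, hZ⟩⟩

/-- Lemma 1 of the paper, after Chen 2019.
Let `V, ζ : [0,∞) → [0,∞)` be continuously differentiable, let
`ψ : [0,∞) → [ψ̲, ψ̄]` with `ψ̲·ψ̄ > 0`, let `ι ∈ ℝ`, and let `ħ` be a BL-type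
Nussbaum function with constant `L > max {ψ̲/ψ̄, ψ̄/ψ̲}`.  If
`V′(t) ≤ (ψ(t)·ħ(ζ(t)) + ι)·ζ′(t)` and `ζ′(t) ≥ 0` for all `t ≥ 0`, then `V` and
`ζ` are bounded on `[0,∞)`. -/
theorem bl_nussbaum_lemma
    (V ζ ψ h : ℝ → ℝ) (ψlo ψhi ι L : ℝ)
    (hV_smooth : ContDiff ℝ 1 V) (hζ_smooth : ContDiff ℝ 1 ζ)
    (hV_nonneg : ∀ t, 0 ≤ t → 0 ≤ V t)
    (hζ_nonneg : ∀ t, 0 ≤ t → 0 ≤ ζ t)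
    (hψ : ∀ t, 0 ≤ t → ψ t ∈ Set.Icc ψlo ψhi)
    (hψprod : 0 < ψlo * ψhi)
    (hL : max (ψlo / ψhi) (ψhi / ψlo) < L)
    (hNuss : IsBLNussbaum h L)
    (hineq : ∀ t, 0 ≤ t → deriv V t ≤ (ψ t * h (ζ t) + ι) * deriv ζ t)
    (hζ_mono : ∀ t, 0 ≤ t → 0 ≤ deriv ζ t) :
    (∃ C : ℝ, ∀ t, 0 ≤ t → V t ≤ C) ∧ (∃ C : ℝ, ∀ t, 0 ≤ t → ζ t ≤ C) :=
  bl_nussbaum_lemma_general V ζ ψ h ψlo ψhi ι L hV_smooth hζ_smooth hV_nonneg hψ hψprod hL hNuss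
    hineq hζ_mono
end

section
/- The function ħ(ζ) = exp(ζ²)·sin(ζ) on [0,∞) is a B-type Nussbaum function; that is, writing ħ⁺(ζ) = max{0, ħ(ζ)} and ħ⁻(ζ) = max{0, −ħ(ζ)}, one has lim_{ζ→∞} (1/ζ)∫₀^ζ ħ⁺(τ)dτ = ∞, lim_{ζ→∞} (1/ζ)∫₀^ζ ħ⁻(τ)dτ = ∞, limsup_{ζ→∞} (∫₀^ζ ħ⁺(τ)dτ)/(∫₀^ζ ħ⁻(τ)dτ) = ∞, and limsup_{ζ→∞} (∫₀^ζ ħ⁻(τ)dτ)/(∫₀^ζ ħ⁺(τ)dτ) = ∞. -/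
open Filter

/-- A continuously differentiable function `ħ : [0,∞) → ℝ` is a *B-type Nussbaum
function* if `lim_{ζ→∞} (1/ζ)∫₀^ζ ħ⁺ = ∞`, `lim_{ζ→∞} (1/ζ)∫₀^ζ ħ⁻ = ∞`,
`limsup_{ζ→∞} (∫₀^ζ ħ⁺)/(∫₀^ζ ħ⁻) = ∞` and `limsup_{ζ→∞} (∫₀^ζ ħ⁻)/(∫₀^ζ ħ⁺) = ∞`
(the limsups are taken in the extended reals so that `= ∞` is meaningful). -/
def IsBNussbaum (h : ℝ → ℝ) : Prop :=
  ContDiff ℝ 1 h ∧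
  Tendsto (fun ζ => (∫ τ in (0:ℝ)..ζ, nussPos h τ) / ζ) atTop atTop ∧
  Tendsto (fun ζ => (∫ τ in (0:ℝ)..ζ, nussNeg h τ) / ζ) atTop atTop ∧
  limsup (fun ζ =>
      (((∫ τ in (0:ℝ)..ζ, nussPos h τ) / (∫ τ in (0:ℝ)..ζ, nussNeg h τ) : ℝ) : EReal)) atTop = ⊤ ∧
  limsup (fun ζ =>
      (((∫ τ in (0:ℝ)..ζ, nussNeg h τ) / (∫ τ in (0:ℝ)..ζ, nussPos h τ) : ℝ) : EReal)) atTop = ⊤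

open Filter Real Set

noncomputable def H : ℝ → ℝ := fun ζ => Real.exp (ζ ^ 2) * Real.sin ζ

lemma H_cont : Continuous H := (Real.continuous_exp.comp (continuous_pow 2)).mul Real.continuous_sin

lemma nussPosH_cont : Continuous (nussPos H) := continuous_const.max H_cont
lemma nussNegH_cont : Continuous (nussNeg H) := continuous_const.max H_cont.neg

lemma nussPosH_nonneg (τ : ℝ) : 0 ≤ nussPos H τ := le_max_left _ _
lemma nussNegH_nonneg (τ : ℝ) : 0 ≤ nussNeg H τ := le_max_left _ _

lemma integral_ge_aux {g : ℝ → ℝ} (hg : Continuous g) (hnn : ∀ τ, 0 ≤ g τ)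
    {s t ζ C : ℝ} (h0s : 0 ≤ s) (hst : s ≤ t) (htζ : t ≤ ζ)
    (hC : ∀ τ ∈ Set.Icc s t, C ≤ g τ) :
    C * (t - s) ≤ ∫ τ in (0:ℝ)..ζ, g τ := by
  calc C * (t - s) = ∫ _ in s..t, C := by
        rw [intervalIntegral.integral_const, smul_eq_mul]; ring
    _ ≤ ∫ τ in s..t, g τ :=
        intervalIntegral.integral_mono_on hst intervalIntegrable_const
          (hg.intervalIntegrable _ _) hC
    _ ≤ ∫ τ in (0:ℝ)..ζ, g τ :=
        intervalIntegral.integral_mono_interval h0s hst htζ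
          (Filter.Eventually.of_forall hnn) (hg.intervalIntegrable _ _)

lemma integral_le_aux {g : ℝ → ℝ} (hg : Continuous g) {ζ C : ℝ} (h0 : 0 ≤ ζ)
    (hC : ∀ τ ∈ Set.Icc (0:ℝ) ζ, g τ ≤ C) :
    (∫ τ in (0:ℝ)..ζ, g τ) ≤ C * ζ := by
  calc (∫ τ in (0:ℝ)..ζ, g τ) ≤ ∫ _ in (0:ℝ)..ζ, C :=
        intervalIntegral.integral_mono_on h0 (hg.intervalIntegrable _ _)
          intervalIntegrable_const hC
    _ = C * ζ := by rw [intervalIntegral.integral_const, smul_eq_mul]; ring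

lemma sin_ge_half {x : ℝ} (h1 : π/6 ≤ x) (h2 : x ≤ 5*π/6) : 1/2 ≤ Real.sin x := by
  have hπ := Real.pi_pos
  rcases le_total x (π/2) with hx | hx
  · rw [← Real.sin_pi_div_six]
    exact Real.strictMonoOn_sin.monotoneOn ⟨by linarith, by linarith⟩ ⟨by linarith, hx⟩ h1
  · rw [← Real.sin_pi_sub, ← Real.sin_pi_div_six]
    exact Real.strictMonoOn_sin.monotoneOn ⟨by linarith, by linarith⟩
      ⟨by linarith, by linarith⟩ (by linarith)

lemma sin_shift (τ : ℝ) (k : ℕ) : Real.sin (τ - 2*k*π) = Real.sin τ := by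
  have := Real.sin_add_nat_mul_two_pi (τ - 2*k*π) k
  rw [show τ - 2*k*π + k*(2*π) = τ by ring] at this
  exact this.symm

lemma nussPos_hump (k : ℕ) {ζ : ℝ} (hζ : 2*k*π + π ≤ ζ) :
    Real.exp ((2*k*π + π/6)^2) ≤ ∫ τ in (0:ℝ)..ζ, nussPos H τ := by
  have hπ3 := Real.pi_gt_three
  have hπ := Real.pi_pos
  have hk : (0:ℝ) ≤ 2*k*π := by positivity
  set s : ℝ := 2*k*π + π/6 with hs
  have h0s : 0 ≤ s := by positivity
  have key : ∀ τ ∈ Set.Icc s (s + 2*π/3), (1/2) * Real.exp (s^2) ≤ nussPos H τ := by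
    rintro τ ⟨hτ1, hτ2⟩
    have hsin : 1/2 ≤ Real.sin τ := by
      rw [← sin_shift τ k]
      exact sin_ge_half (by simp only [hs] at hτ1 ⊢; linarith) (by simp only [hs] at hτ2 ⊢; linarith)
    have hexp : Real.exp (s^2) ≤ Real.exp (τ^2) :=
      Real.exp_le_exp.mpr (pow_le_pow_left₀ h0s hτ1 2)
    have : (1/2) * Real.exp (s^2) ≤ Real.exp (τ^2) * Real.sin τ := by
      nlinarith [Real.exp_pos (τ^2)]
    exact this.trans (le_max_right _ _)
  have := integral_ge_aux (ζ := ζ) nussPosH_cont nussPosH_nonneg h0s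
      (by linarith : s ≤ s + 2*π/3) (by simp only [hs]; linarith) key
  calc Real.exp (s^2) ≤ (1/2) * Real.exp (s^2) * (s + 2*π/3 - s) := by
        nlinarith [Real.exp_pos (s^2)]
    _ ≤ _ := this

lemma nussNeg_hump (k : ℕ) {ζ : ℝ} (hζ : 2*k*π + 2*π ≤ ζ) :
    Real.exp ((2*k*π + π + π/6)^2) ≤ ∫ τ in (0:ℝ)..ζ, nussNeg H τ := by
  have hπ3 := Real.pi_gt_three
  have hπ := Real.pi_pos
  have hk : (0:ℝ) ≤ 2*k*π := by positivity
  set s : ℝ := 2*k*π + π + π/6 with hs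
  have h0s : 0 ≤ s := by positivity
  have key : ∀ τ ∈ Set.Icc s (s + 2*π/3), (1/2) * Real.exp (s^2) ≤ nussNeg H τ := by
    rintro τ ⟨hτ1, hτ2⟩
    have hsin : Real.sin τ ≤ -(1/2) := by
      have h1 : 1/2 ≤ Real.sin (τ - 2*k*π - π) :=
        sin_ge_half (by simp only [hs] at hτ1 ⊢; linarith) (by simp only [hs] at hτ2 ⊢; linarith)
      have h2 : Real.sin (τ - 2*k*π - π + π) = -Real.sin (τ - 2*k*π - π) := Real.sin_add_pi _
      rw [show τ - 2*k*π - π + π = τ - 2*k*π by ring, sin_shift τ k] at h2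
      linarith
    have hexp : Real.exp (s^2) ≤ Real.exp (τ^2) :=
      Real.exp_le_exp.mpr (pow_le_pow_left₀ h0s hτ1 2)
    have : (1/2) * Real.exp (s^2) ≤ -(Real.exp (τ^2) * Real.sin τ) := by
      nlinarith [Real.exp_pos (τ^2)]
    exact this.trans (le_max_right _ _)
  have := integral_ge_aux (ζ := ζ) nussNegH_cont nussNegH_nonneg h0s
      (by linarith : s ≤ s + 2*π/3) (by simp only [hs]; linarith) key
  calc Real.exp (s^2) ≤ (1/2) * Real.exp (s^2) * (s + 2*π/3 - s) := by
        nlinarith [Real.exp_pos (s^2)]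
    _ ≤ _ := this

lemma nussPos_le (τ : ℝ) : nussPos H τ ≤ Real.exp (τ^2) := by
  apply max_le (Real.exp_pos _).le
  have := Real.sin_le_one τ
  have := Real.exp_pos (τ^2)
  show Real.exp (τ^2) * Real.sin τ ≤ _
  nlinarith

lemma nussNeg_le (τ : ℝ) : nussNeg H τ ≤ Real.exp (τ^2) := by
  apply max_le (Real.exp_pos _).le
  have := Real.neg_one_le_sin τ
  have := Real.exp_pos (τ^2)
  show -(Real.exp (τ^2) * Real.sin τ) ≤ _
  nlinarith

/-- Lower bound for `∫₀^ζ ħ⁺` valid for all `ζ ≥ 3π`. -/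
lemma keyP {ζ : ℝ} (hζ : 3*π ≤ ζ) :
    Real.exp ((ζ - 3*π)^2) ≤ ∫ τ in (0:ℝ)..ζ, nussPos H τ := by
  have hπ := Real.pi_pos
  set k : ℕ := ⌈(ζ - 3*π)/(2*π)⌉₊ with hk
  have h0 : (0:ℝ) ≤ (ζ - 3*π)/(2*π) := div_nonneg (by linarith) (by linarith)
  have h1 : ζ - 3*π ≤ 2*k*π := by
    have := Nat.le_ceil ((ζ - 3*π)/(2*π))
    rw [div_le_iff₀ (by linarith)] at this
    calc ζ - 3*π ≤ ⌈(ζ - 3*π)/(2*π)⌉₊ * (2*π) := this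
      _ = 2*k*π := by rw [hk]; ring
  have h2 : 2*k*π + π ≤ ζ := by
    have := Nat.ceil_lt_add_one h0
    rw [← hk, show (ζ - 3*π)/(2*π) + 1 = (ζ - π)/(2*π) by field_simp; ring] at this
    rw [lt_div_iff₀ (by linarith)] at this
    nlinarith
  calc Real.exp ((ζ - 3*π)^2) ≤ Real.exp ((2*k*π + π/6)^2) := by
        apply Real.exp_le_exp.mpr
        apply pow_le_pow_left₀ (by linarith) (by linarith)
    _ ≤ _ := nussPos_hump k h2

/-- Lower bound for `∫₀^ζ ħ⁻` valid for all `ζ ≥ 4π`. -/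
lemma keyN {ζ : ℝ} (hζ : 4*π ≤ ζ) :
    Real.exp ((ζ - 4*π)^2) ≤ ∫ τ in (0:ℝ)..ζ, nussNeg H τ := by
  have hπ := Real.pi_pos
  set k : ℕ := ⌈(ζ - 4*π)/(2*π)⌉₊ with hk
  have h0 : (0:ℝ) ≤ (ζ - 4*π)/(2*π) := div_nonneg (by linarith) (by linarith)
  have h1 : ζ - 4*π ≤ 2*k*π := by
    have := Nat.le_ceil ((ζ - 4*π)/(2*π))
    rw [div_le_iff₀ (by linarith)] at this
    calc ζ - 4*π ≤ ⌈(ζ - 4*π)/(2*π)⌉₊ * (2*π) := this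
      _ = 2*k*π := by rw [hk]; ring
  have h2 : 2*k*π + 2*π ≤ ζ := by
    have := Nat.ceil_lt_add_one h0
    rw [← hk, show (ζ - 4*π)/(2*π) + 1 = (ζ - 2*π)/(2*π) by field_simp; ring] at this
    rw [lt_div_iff₀ (by linarith)] at this
    nlinarith
  calc Real.exp ((ζ - 4*π)^2) ≤ Real.exp ((2*k*π + π + π/6)^2) := by
        apply Real.exp_le_exp.mpr
        apply pow_le_pow_left₀ (by linarith) (by linarith)
    _ ≤ _ := nussNeg_hump k h2

lemma upperN (k : ℕ) :
    (∫ τ in (0:ℝ)..(2*k*π + π), nussNeg H τ) ≤ Real.exp ((2*k*π)^2) * (2*k*π + π) := by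
  have hπ := Real.pi_pos
  have hk : (0:ℝ) ≤ 2*k*π := by positivity
  apply integral_le_aux nussNegH_cont (by linarith)
  rintro τ ⟨h0τ, hτ⟩
  rcases le_total τ (2*k*π) with hc | hc
  · exact (nussNeg_le τ).trans (Real.exp_le_exp.mpr (pow_le_pow_left₀ h0τ hc 2))
  · have hsin : 0 ≤ Real.sin τ := by
      rw [← sin_shift τ k]
      exact Real.sin_nonneg_of_nonneg_of_le_pi (by linarith) (by linarith)
    have : nussNeg H τ = 0 := max_eq_left (by
      show -(Real.exp (τ^2) * Real.sin τ) ≤ 0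
      nlinarith [Real.exp_pos (τ^2)])
    rw [this]
    positivity

lemma upperP (k : ℕ) :
    (∫ τ in (0:ℝ)..(2*k*π + 2*π), nussPos H τ) ≤ Real.exp ((2*k*π + π)^2) * (2*k*π + 2*π) := by
  have hπ := Real.pi_pos
  have hk : (0:ℝ) ≤ 2*k*π := by positivity
  apply integral_le_aux nussPosH_cont (by linarith)
  rintro τ ⟨h0τ, hτ⟩
  rcases le_total τ (2*k*π + π) with hc | hc
  · exact (nussPos_le τ).trans (Real.exp_le_exp.mpr (pow_le_pow_left₀ h0τ hc 2))
  · have hsin : Real.sin τ ≤ 0 := by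
      have h1 : 0 ≤ Real.sin (τ - 2*k*π - π) :=
        Real.sin_nonneg_of_nonneg_of_le_pi (by linarith) (by linarith)
      have h2 : Real.sin (τ - 2*k*π - π + π) = -Real.sin (τ - 2*k*π - π) := Real.sin_add_pi _
      rw [show τ - 2*k*π - π + π = τ - 2*k*π by ring, sin_shift τ k] at h2
      linarith
    have : nussPos H τ = 0 := max_eq_left (by
      show Real.exp (τ^2) * Real.sin τ ≤ 0
      nlinarith [Real.exp_pos (τ^2)])
    rw [this]
    positivity

lemma tendsto_exp_shift (c : ℝ) :
    Tendsto (fun ζ : ℝ => Real.exp ((ζ - c)^2) / ζ) atTop atTop := by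
  have base : Tendsto (fun ζ : ℝ => Real.exp ζ / ζ) atTop atTop := by
    simpa using Real.tendsto_exp_div_pow_atTop 1
  apply tendsto_atTop_mono' atTop ?_ base
  filter_upwards [eventually_ge_atTop (2*c + 1), eventually_gt_atTop 0,
    eventually_ge_atTop (2*|c| + 1)] with ζ h1 h2 h3
  have hc : |c| ≥ c := le_abs_self c
  have hc' : |c| ≥ -c := neg_le_abs c
  have key : ζ ≤ (ζ - c)^2 := by nlinarith [abs_nonneg c]
  exact div_le_div_of_nonneg_right (Real.exp_le_exp.mpr key) h2.le |>.trans_eq rfl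

lemma tendstoP : Tendsto (fun ζ => (∫ τ in (0:ℝ)..ζ, nussPos H τ) / ζ) atTop atTop := by
  apply tendsto_atTop_mono' atTop ?_ (tendsto_exp_shift (3*π))
  filter_upwards [eventually_ge_atTop (3*π), eventually_gt_atTop 0] with ζ h1 h2
  exact div_le_div_of_nonneg_right (keyP h1) h2.le |>.trans_eq rfl

lemma tendstoN : Tendsto (fun ζ => (∫ τ in (0:ℝ)..ζ, nussNeg H τ) / ζ) atTop atTop := by
  apply tendsto_atTop_mono' atTop ?_ (tendsto_exp_shift (4*π))
  filter_upwards [eventually_ge_atTop (4*π), eventually_gt_atTop 0] with ζ h1 h2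
  exact div_le_div_of_nonneg_right (keyN h1) h2.le |>.trans_eq rfl

lemma limsup_top_of_frequently {f : ℝ → ℝ} (h : ∀ M : ℝ, ∃ᶠ ζ in atTop, M ≤ f ζ) :
    limsup (fun ζ => ((f ζ : ℝ) : EReal)) atTop = ⊤ := by
  rw [EReal.eq_top_iff_forall_lt]
  intro y
  have hle : ((y + 1 : ℝ) : EReal) ≤ limsup (fun ζ => ((f ζ : ℝ) : EReal)) atTop :=
    le_limsup_of_frequently_le' ((h (y+1)).mono fun ζ hζ => by exact_mod_cast hζ)
  refine lt_of_lt_of_le ?_ hle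
  exact_mod_cast lt_add_one y

lemma exists_big_k (Z M : ℝ) : ∃ k : ℕ, 2 ≤ k ∧ Z ≤ (k:ℝ) ∧ 4*M ≤ (k:ℝ) := by
  refine ⟨max 2 (max ⌈Z⌉₊ ⌈4*M⌉₊), le_max_left _ _, ?_, ?_⟩
  · calc Z ≤ (⌈Z⌉₊ : ℝ) := Nat.le_ceil Z
      _ ≤ _ := by exact_mod_cast le_max_of_le_right (le_max_left _ _)
  · calc 4*M ≤ (⌈4*M⌉₊ : ℝ) := Nat.le_ceil _
      _ ≤ _ := by exact_mod_cast le_max_of_le_right (le_max_right _ _)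

lemma sq_3k1_le_exp (k : ℕ) : ((3*k+1:ℝ))^2 ≤ Real.exp (6*k) := by
  have h1 : (3*(k:ℝ)) + 1 ≤ Real.exp (3*k) := Real.add_one_le_exp _
  have h2 : (0:ℝ) ≤ 3*(k:ℝ) + 1 := by positivity
  rw [show (6*(k:ℝ)) = 3*k + 3*k by ring, Real.exp_add]
  nlinarith

lemma freqPN (M : ℝ) : ∃ᶠ ζ in atTop,
    M ≤ (∫ τ in (0:ℝ)..ζ, nussPos H τ) / (∫ τ in (0:ℝ)..ζ, nussNeg H τ) := by
  rw [frequently_atTop]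
  intro Z
  obtain ⟨k, hk2, hkZ, hkM⟩ := exists_big_k Z M
  have hπ3 := Real.pi_gt_three
  have hπ4 := Real.pi_le_four
  have hkr : (0:ℝ) ≤ k := k.cast_nonneg
  have hk2r : (2:ℝ) ≤ k := by exact_mod_cast hk2
  refine ⟨2*k*π + π, by nlinarith, ?_⟩
  set P := ∫ τ in (0:ℝ)..(2*k*π + π), nussPos H τ with hP
  set N := ∫ τ in (0:ℝ)..(2*k*π + π), nussNeg H τ with hN
  have hNpos : 0 < N :=
    lt_of_lt_of_le (Real.exp_pos _) (keyN (by nlinarith))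
  have hNub : N ≤ Real.exp ((2*k*π)^2) * (2*k*π + π) := upperN k
  have hPlb : Real.exp ((2*k*π + π/6)^2) ≤ P := nussPos_hump k le_rfl
  have hNubpos : 0 < Real.exp ((2*k*π)^2) * (2*k*π + π) := by positivity
  have step1 : Real.exp ((2*k*π + π/6)^2) / (Real.exp ((2*k*π)^2) * (2*k*π + π)) ≤ P / N :=
    div_le_div₀ ((Real.exp_pos _).le.trans hPlb) hPlb hNpos hNub
  refine le_trans ?_ step1
  rw [le_div_iff₀ hNubpos]
  have e1 : Real.exp ((2*k*π + π/6)^2) =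
      Real.exp ((2*k*π)^2) * Real.exp (2*k*π*(π/3) + (π/6)^2) := by
    rw [← Real.exp_add]; congr 1; ring
  rw [e1]
  have h3 : M * (2*k*π + π) ≤ Real.exp (2*k*π*(π/3) + (π/6)^2) := by
    have hE : (6*(k:ℝ)) ≤ 2*k*π*(π/3) + (π/6)^2 := by nlinarith [mul_nonneg hkr (show (0:ℝ) ≤ π*π - 9 by nlinarith)]
    have hch : ((3*k+1:ℝ))^2 ≤ Real.exp (2*k*π*(π/3) + (π/6)^2) :=
      (sq_3k1_le_exp k).trans (Real.exp_le_exp.mpr hE)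
    refine le_trans ?_ hch
    rcases le_or_gt M 0 with hM | hM
    · nlinarith
    · nlinarith [mul_le_mul_of_nonneg_left (show 2*(k:ℝ)*π + π ≤ 8*k + 4 by nlinarith) hM.le,
        mul_le_mul_of_nonneg_right hkM (show (0:ℝ) ≤ 8*k + 4 by positivity)]
  calc M * (Real.exp ((2*k*π)^2) * (2*k*π + π))
      = Real.exp ((2*k*π)^2) * (M * (2*k*π + π)) := by ring
    _ ≤ _ := mul_le_mul_of_nonneg_left h3 (Real.exp_pos _).le

lemma freqNP (M : ℝ) : ∃ᶠ ζ in atTop,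
    M ≤ (∫ τ in (0:ℝ)..ζ, nussNeg H τ) / (∫ τ in (0:ℝ)..ζ, nussPos H τ) := by
  rw [frequently_atTop]
  intro Z
  obtain ⟨k, hk2, hkZ, hkM⟩ := exists_big_k Z M
  have hπ3 := Real.pi_gt_three
  have hπ4 := Real.pi_le_four
  have hkr : (0:ℝ) ≤ k := k.cast_nonneg
  have hk2r : (2:ℝ) ≤ k := by exact_mod_cast hk2
  refine ⟨2*k*π + 2*π, by nlinarith, ?_⟩
  set P := ∫ τ in (0:ℝ)..(2*k*π + 2*π), nussPos H τ with hP
  set N := ∫ τ in (0:ℝ)..(2*k*π + 2*π), nussNeg H τ with hN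
  have hPpos : 0 < P :=
    lt_of_lt_of_le (Real.exp_pos _) (keyP (by nlinarith))
  have hPub : P ≤ Real.exp ((2*k*π + π)^2) * (2*k*π + 2*π) := upperP k
  have hNlb : Real.exp ((2*k*π + π + π/6)^2) ≤ N := nussNeg_hump k le_rfl
  have hPubpos : 0 < Real.exp ((2*k*π + π)^2) * (2*k*π + 2*π) := by positivity
  have step1 : Real.exp ((2*k*π + π + π/6)^2) / (Real.exp ((2*k*π + π)^2) * (2*k*π + 2*π)) ≤ N / P :=
    div_le_div₀ ((Real.exp_pos _).le.trans hNlb) hNlb hPpos hPub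
  refine le_trans ?_ step1
  rw [le_div_iff₀ hPubpos]
  have e1 : Real.exp ((2*k*π + π + π/6)^2) =
      Real.exp ((2*k*π + π)^2) * Real.exp ((2*k*π + π)*(π/3) + (π/6)^2) := by
    rw [← Real.exp_add]; congr 1; ring
  rw [e1]
  have h3 : M * (2*k*π + 2*π) ≤ Real.exp ((2*k*π + π)*(π/3) + (π/6)^2) := by
    have hE : (6*(k:ℝ)) ≤ (2*k*π + π)*(π/3) + (π/6)^2 := by nlinarith [mul_nonneg hkr (show (0:ℝ) ≤ π*π - 9 by nlinarith)]
    have hch : ((3*k+1:ℝ))^2 ≤ Real.exp ((2*k*π + π)*(π/3) + (π/6)^2) :=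
      (sq_3k1_le_exp k).trans (Real.exp_le_exp.mpr hE)
    refine le_trans ?_ hch
    rcases le_or_gt M 0 with hM | hM
    · nlinarith
    · nlinarith [mul_le_mul_of_nonneg_left (show 2*(k:ℝ)*π + 2*π ≤ 8*k + 8 by nlinarith) hM.le,
        mul_le_mul_of_nonneg_right hkM (show (0:ℝ) ≤ 8*k + 8 by positivity)]
  calc M * (Real.exp ((2*k*π + π)^2) * (2*k*π + 2*π))
      = Real.exp ((2*k*π + π)^2) * (M * (2*k*π + 2*π)) := by ring
    _ ≤ _ := mul_le_mul_of_nonneg_left h3 (Real.exp_pos _).le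

/-- the function `ħ(ζ) = exp(ζ²)·sin(ζ)` is a B-type Nussbaum
function. -/
theorem exp_sq_sin_isBNussbaum :
    IsBNussbaum (fun ζ : ℝ => Real.exp (ζ ^ 2) * Real.sin ζ) := by
  refine ⟨?_, tendstoP, tendstoN, limsup_top_of_frequently freqPN,
    limsup_top_of_frequently freqNP⟩
  exact (Real.contDiff_exp.comp (contDiff_id.pow 2)).mul Real.contDiff_sin
end

section
/- Let n ≥ 2 and m ≥ 1 be integers and let λ₁, …, λ_{n−1} be real numbers such that the polynomial z^{n−1} + λ_{n−1}z^{n−2} + ⋯ + λ₂z + λ₁ is Hurwitz, i.e., every complex root of it has negative real part. Let e : [0,∞) → ℝ^m be (n−1)-times continuously differentiable and define the filtered error s(t) = λ₁e(t) + λ₂e′(t) + ⋯ + λ_{n−1}e^{(n−2)}(t) + e^{(n−1)}(t). If s(t) → 0 as t → ∞, then e^{(i)}(t) → 0 as t → ∞ for every i = 0, 1, …, n−1. -/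
/-!
Over `ℂ` the characteristic polynomial factors as `∏ (X - μₖ)` with `Re μₖ < 0`, so the filtered
error is `s = (D - μ₁) ⋯ (D - μₙ₋₁) e` coordinatewise, with `D = d/dt`. Peeling off one factor at
a time reduces everything to the first-order case: if `g' - μ g → 0` with `Re μ < 0`, then
`g → 0`, because `exp(-μt) g(t)` has derivative `exp(-μt) (g' - μ g)(t)` and a fencing argument
bounds `‖g t‖` by `exp(Re μ (t - T)) ‖g T‖ + sup_{τ ≥ T} ‖g' τ - μ g τ‖ / (-Re μ)`.
Once the lower derivatives tend to `0`, so does the top one, since `P` is monic.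
-/

open Filter Polynomial Topology

section

variable {E : Type*} [NormedAddCommGroup E] [NormedSpace ℂ E]

theorem norm_le_of_norm_deriv_sub_smul_le {f f' : ℝ → E} {μ : ℂ} (hμ : μ.re < 0)
    (hf : ∀ t, HasDerivAt f (f' t) t) {T δ : ℝ} (hδ : ∀ t ≥ T, ‖f' t - μ • f t‖ ≤ δ)
    {t : ℝ} (ht : T ≤ t) :
    ‖f t‖ ≤ Real.exp (μ.re * (t - T)) * ‖f T‖ + δ / -μ.re := by
  set c := -μ.re with hc_def
  have hc : 0 < c := neg_pos.2 hμ
  have hδ0 : 0 ≤ δ := (norm_nonneg _).trans (hδ T le_rfl)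
  have norm_exp : ∀ τ : ℝ, ‖Complex.exp (-(μ * τ))‖ = Real.exp (c * τ) := fun τ => by
    simp [Complex.norm_exp, hc_def]
  set g : ℝ → E := fun τ => Complex.exp (-(μ * τ)) • f τ
  have hg : ∀ τ : ℝ, HasDerivAt g (Complex.exp (-(μ * τ)) • (f' τ - μ • f τ)) τ := fun τ => by
    have hexp : HasDerivAt (fun τ : ℝ => Complex.exp (-(μ * τ))) (Complex.exp (-(μ * τ)) * -μ) τ :=
      (((Complex.ofRealCLM.hasDerivAt (x := τ)).const_mul μ).neg.cexp).congr_deriv (by simp)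
    convert hexp.fun_smul (hf τ) using 1
    rw [smul_sub, smul_smul, mul_neg, neg_smul, sub_eq_neg_add, add_comm]
  -- the comparison function solves `B' = δ exp(cτ)`, `B T = ‖g T‖`
  have hB : ∀ τ, HasDerivAt (fun τ => ‖g T‖ + δ * (Real.exp (c * τ) - Real.exp (c * T)) / c)
      (δ * Real.exp (c * τ)) τ := fun τ => by
    refine (((((hasDerivAt_id' τ).const_mul c).exp.sub_const _).const_mul δ).div_const c).const_add
      _ |>.congr_deriv ?_
    field_simp
  have hgt : ‖g t‖ ≤ ‖g T‖ + δ * (Real.exp (c * t) - Real.exp (c * T)) / c :=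
    image_norm_le_of_norm_deriv_right_le_deriv_boundary
      (fun τ _ => (hg τ).continuousAt.continuousWithinAt) (fun τ _ => (hg τ).hasDerivWithinAt)
      (by simp) hB (fun τ hτ => by
        rw [norm_smul, norm_exp, mul_comm]
        exact mul_le_mul_of_nonneg_right (hδ τ hτ.1) (Real.exp_pos _).le) ⟨ht, le_rfl⟩
  have hft : ‖f t‖ = Real.exp (-(c * t)) * ‖g t‖ := by
    simp only [g, norm_smul, norm_exp, ← mul_assoc, ← Real.exp_add, neg_add_cancel, Real.exp_zero,
      one_mul]
  have hgT : ‖g T‖ = Real.exp (c * T) * ‖f T‖ := by simp only [g, norm_smul, norm_exp]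
  rw [hft]
  calc Real.exp (-(c * t)) * ‖g t‖
      ≤ Real.exp (-(c * t)) * (‖g T‖ + δ * (Real.exp (c * t) - Real.exp (c * T)) / c) :=
        mul_le_mul_of_nonneg_left hgt (Real.exp_pos _).le
    _ = Real.exp (μ.re * (t - T)) * ‖f T‖ + δ / c - δ * Real.exp (μ.re * (t - T)) / c := by
        have hexp : Real.exp (-(c * t)) * Real.exp (c * t) = 1 := by
          rw [← Real.exp_add, neg_add_cancel, Real.exp_zero]
        rw [hgT, show μ.re * (t - T) = -(c * t) + c * T by rw [hc_def]; ring, Real.exp_add]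
        field_simp
        linear_combination δ * hexp
    _ ≤ _ := sub_le_self _ (by positivity)

theorem tendsto_zero_of_tendsto_deriv_sub_smul {f : ℝ → E} {μ : ℂ} (hμ : μ.re < 0)
    (hf : Differentiable ℝ f) (h : Tendsto (fun t => deriv f t - μ • f t) atTop (𝓝 0)) :
    Tendsto f atTop (𝓝 0) := by
  rw [NormedAddGroup.tendsto_nhds_zero] at h ⊢
  intro ε hε
  have hc : 0 < -μ.re := neg_pos.2 hμ
  obtain ⟨T, hT⟩ := eventually_atTop.1 (h (ε * -μ.re / 2) (by positivity))
  have hdecay : Tendsto (fun t => Real.exp (μ.re * (t - T)) * ‖f T‖) atTop (𝓝 0) := by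
    have := (tendsto_atTop_add_const_right atTop (-T) tendsto_id).const_mul_atTop_of_neg hμ
    simpa [sub_eq_add_neg] using (Real.tendsto_exp_atBot.comp this).mul_const ‖f T‖
  filter_upwards [eventually_ge_atTop T, hdecay.eventually (gt_mem_nhds (half_pos hε))]
    with t hTt ht
  calc ‖f t‖ ≤ Real.exp (μ.re * (t - T)) * ‖f T‖ + ε * -μ.re / 2 / -μ.re :=
        norm_le_of_norm_deriv_sub_smul_le hμ (fun t => (hf t).hasDerivAt)
          (fun τ hτ => (hT τ hτ).le) hTt
    _ < ε / 2 + ε / 2 := by rw [mul_div_right_comm, mul_div_cancel_right₀ _ hc.ne']; linarith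
    _ = ε := add_halves ε

/-- `diffOp f P` is `P(d/dt) f`. -/
noncomputable def diffOp (f : ℝ → E) : ℂ[X] →ₗ[ℂ] ℝ → E :=
  lsum fun i => LinearMap.toSpanSingleton ℂ (ℝ → E) (iteratedDeriv i f)

theorem diffOp_apply (f : ℝ → E) (P : ℂ[X]) (t : ℝ) :
    diffOp f P t = ∑ i ∈ P.support, P.coeff i • iteratedDeriv i f t := by
  simp [diffOp, Polynomial.sum_def]

theorem diffOp_monomial (f : ℝ → E) (k : ℕ) (a : ℂ) :
    diffOp f (monomial k a) = a • iteratedDeriv k f := by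
  simp [diffOp]

theorem diffOp_X_pow (f : ℝ → E) (k : ℕ) : diffOp f (X ^ k) = iteratedDeriv k f := by
  rw [← monomial_one_right_eq_X_pow, diffOp_monomial, one_smul]

theorem diffOp_X_mul (f : ℝ → E) (P : ℂ[X]) : diffOp f (X * P) = diffOp (deriv f) P := by
  induction P using Polynomial.induction_on' with
  | add P Q hP hQ => rw [mul_add, map_add, map_add, hP, hQ]
  | monomial k a => rw [X_mul_monomial, diffOp_monomial, diffOp_monomial, iteratedDeriv_succ']

theorem hasDerivAt_diffOp {f : ℝ → E} {N : ℕ} (hf : ContDiff ℝ N f) {P : ℂ[X]}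
    (hP : P.natDegree < N) (t : ℝ) : HasDerivAt (diffOp f P) (diffOp f (X * P) t) t := by
  rw [diffOp_X_mul, diffOp_apply, show diffOp f P = fun t => ∑ i ∈ P.support,
    P.coeff i • iteratedDeriv i f t from funext (diffOp_apply f P)]
  refine HasDerivAt.fun_sum fun i hi => HasDerivAt.const_smul _ ?_
  rw [← iteratedDeriv_succ', iteratedDeriv_succ]
  refine (hf.differentiable_iteratedDeriv i ?_ t).hasDerivAt
  exact_mod_cast (le_natDegree_of_mem_supp i hi).trans_lt hP

theorem tendsto_diffOp_zero {f : ℝ → E} {P : ℂ[X]}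
    (h : ∀ i ∈ P.support, Tendsto (iteratedDeriv i f) atTop (𝓝 0)) :
    Tendsto (diffOp f P) atTop (𝓝 0) := by
  rw [show diffOp f P = fun t => ∑ i ∈ P.support, P.coeff i • iteratedDeriv i f t from
    funext (diffOp_apply f P)]
  simpa using tendsto_finsetSum _ fun i hi => (h i hi).const_smul (P.coeff i)

theorem tendsto_iteratedDeriv_natDegree {f : ℝ → E} {P : ℂ[X]} (hP : P.Monic)
    (hlow : ∀ i < P.natDegree, Tendsto (iteratedDeriv i f) atTop (𝓝 0))
    (h : Tendsto (diffOp f P) atTop (𝓝 0)) :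
    Tendsto (iteratedDeriv P.natDegree f) atTop (𝓝 0) := by
  have hsplit : diffOp f P = diffOp f P.eraseLead + iteratedDeriv P.natDegree f := by
    conv_lhs => rw [← eraseLead_add_monomial_natDegree_leadingCoeff P]
    rw [map_add, diffOp_monomial, hP.leadingCoeff, one_smul]
  have hlead := tendsto_diffOp_zero fun i hi => hlow i (lt_natDegree_of_mem_eraseLead_support hi)
  simpa [hsplit] using h.sub hlead

theorem tendsto_iteratedDeriv_of_tendsto_diffOp_prod (s : Multiset ℂ) (hs : ∀ μ ∈ s, μ.re < 0)
    {f : ℝ → E} (hf : ContDiff ℝ (Multiset.card s) f)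
    (h : Tendsto (diffOp f (s.map fun μ => X - C μ).prod) atTop (𝓝 0)) :
    ∀ i ≤ Multiset.card s, Tendsto (iteratedDeriv i f) atTop (𝓝 0) := by
  induction s using Multiset.induction_on with
  | empty =>
    rw [Multiset.map_zero, Multiset.prod_zero, ← pow_zero X, diffOp_X_pow] at h
    intro i hi
    rwa [Nat.le_zero.1 hi]
  | cons μ s ih =>
    set Q := (s.map fun μ => X - C μ).prod
    have hQ : Q.Monic := monic_multiset_prod_of_monic _ _ fun μ _ => monic_X_sub_C μ
    have hQdeg : Q.natDegree = Multiset.card s := natDegree_multiset_prod_X_sub_C_eq_card s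
    have hP : ((μ ::ₘ s).map fun μ => X - C μ).prod = (X - C μ) * Q := by
      rw [Multiset.map_cons, Multiset.prod_cons]
    rw [Multiset.card_cons] at hf ⊢
    have hQderiv := hasDerivAt_diffOp hf (hQdeg.trans_lt (Nat.lt_succ_self _))
    have hQlim : Tendsto (diffOp f Q) atTop (𝓝 0) := by
      refine tendsto_zero_of_tendsto_deriv_sub_smul (hs μ (Multiset.mem_cons_self μ s))
        (fun t => (hQderiv t).differentiableAt) ?_
      rw [hP, sub_mul, C_mul', map_sub, map_smul] at h
      simp_rw [(hQderiv _).deriv]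
      exact h
    have hlow := ih (fun ν hν => hs ν (Multiset.mem_cons_of_mem hν))
      (hf.of_le (by norm_cast; omega)) hQlim
    intro i hi
    rcases Nat.lt_succ_iff_lt_or_eq.1 (Nat.lt_succ_of_le hi) with hi | rfl
    · exact hlow i (Nat.lt_succ_iff.1 hi)
    · have hPdeg : ((X - C μ) * Q).natDegree = Multiset.card s + 1 := by
        rw [(monic_X_sub_C μ).natDegree_mul hQ, natDegree_X_sub_C, hQdeg, add_comm]
      rw [← hPdeg]
      exact tendsto_iteratedDeriv_natDegree ((monic_X_sub_C μ).mul hQ)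
        (fun i hi => hlow i (by omega)) (hP ▸ h)

theorem Polynomial.Monic.tendsto_iteratedDeriv_of_tendsto_diffOp {P : ℂ[X]} (hP : P.Monic)
    (hroots : ∀ z, P.IsRoot z → z.re < 0) {f : ℝ → E} (hf : ContDiff ℝ P.natDegree f)
    (h : Tendsto (diffOp f P) atTop (𝓝 0)) :
    ∀ i ≤ P.natDegree, Tendsto (iteratedDeriv i f) atTop (𝓝 0) := by
  have hcard : Multiset.card P.roots = P.natDegree := IsAlgClosed.card_roots_eq_natDegree
  have hprod := prod_multiset_X_sub_C_of_monic_of_roots_card_eq hP hcard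
  rw [← hcard] at hf ⊢
  rw [← hprod] at h
  exact tendsto_iteratedDeriv_of_tendsto_diffOp_prod P.roots
    (fun z hz => hroots z (isRoot_of_mem_roots hz)) hf h

end

theorem Polynomial.monic_X_pow_add_sum_fin {R : Type*} [Semiring R] {n : ℕ} (a : Fin n → R) :
    (X ^ n + ∑ j : Fin n, C (a j) * X ^ (j : ℕ)).Monic :=
  monic_X_pow_add (degree_sum_fin_lt a)

theorem Polynomial.natDegree_X_pow_add_sum_fin {R : Type*} [Semiring R] [Nontrivial R] {n : ℕ}
    (a : Fin n → R) : (X ^ n + ∑ j : Fin n, C (a j) * X ^ (j : ℕ)).natDegree = n := by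
  rw [natDegree_add_eq_left_of_degree_lt (by rw [degree_X_pow]; exact degree_sum_fin_lt a),
    natDegree_X_pow]

theorem ContinuousLinearMap.iteratedDeriv_comp_left {𝕜 F G : Type*} [NontriviallyNormedField 𝕜]
    [NormedAddCommGroup F] [NormedSpace 𝕜 F] [NormedAddCommGroup G] [NormedSpace 𝕜 G]
    (φ : F →L[𝕜] G) {f : 𝕜 → F} {N : ℕ∞} (hf : ContDiff 𝕜 N f) {i : ℕ} (hi : i ≤ N) :
    iteratedDeriv i (φ ∘ f) = φ ∘ iteratedDeriv i f := by
  ext t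
  simp only [iteratedDeriv_eq_iteratedFDeriv, φ.iteratedFDeriv_comp_left hf.contDiffAt
    (by exact_mod_cast hi), Function.comp_apply, compContinuousMultilinearMap_coe]

theorem filtered_error_convergence_general
    (n m : ℕ)
    (lam : Fin (n - 1) → ℝ)
    (hHurwitz : ∀ z : ℂ,
        z ^ (n - 1) + ∑ j : Fin (n - 1), (lam j : ℂ) * z ^ (j : ℕ) = 0 → z.re < 0)
    (e : ℝ → EuclideanSpace ℝ (Fin m))
    (he : ContDiff ℝ (n - 1 : ℕ) e)
    (s : ℝ → EuclideanSpace ℝ (Fin m))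
    (hs_def : ∀ t, s t =
        (∑ j : Fin (n - 1), lam j • iteratedDeriv (j : ℕ) e t) + iteratedDeriv (n - 1) e t)
    (hs_lim : Tendsto s atTop (nhds 0)) :
    ∀ i ≤ n - 1, Tendsto (iteratedDeriv i e) atTop (nhds 0) := by
  set P : ℂ[X] := X ^ (n - 1) + ∑ j : Fin (n - 1), C (lam j : ℂ) * X ^ (j : ℕ)
  have hP : P.Monic := monic_X_pow_add_sum_fin _
  have hPdeg : P.natDegree = n - 1 := natDegree_X_pow_add_sum_fin _
  have hroots : ∀ z, P.IsRoot z → z.re < 0 := fun z hz =>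
    hHurwitz z (by simpa [P, eval_finsetSum] using hz)
  intro i hi
  have hcoord : ∀ k, Tendsto (fun t => iteratedDeriv i e t k) atTop (𝓝 0) := by
    intro k
    set φ : EuclideanSpace ℝ (Fin m) →L[ℝ] ℂ := Complex.ofRealCLM.comp (EuclideanSpace.proj k)
    have hφ : ∀ r ≤ n - 1, iteratedDeriv r (φ ∘ e) = φ ∘ iteratedDeriv r e := fun r hr =>
      φ.iteratedDeriv_comp_left he (by exact_mod_cast hr)
    have hdiff : diffOp (φ ∘ e) P = φ ∘ s := by
      ext t
      simp only [P, map_add, map_sum, C_mul', map_smul, diffOp_X_pow, hφ, le_refl, Fin.is_le',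
        Pi.add_apply, Finset.sum_apply, Pi.smul_apply, Function.comp_apply, hs_def,
        Complex.real_smul, Complex.coe_smul, LinearMap.map_smul_of_tower]
      rw [add_comm]
    have := hP.tendsto_iteratedDeriv_of_tendsto_diffOp hroots (hPdeg ▸ φ.contDiff.comp he)
      (hdiff ▸ (φ.continuous.tendsto' 0 0 (map_zero φ)).comp hs_lim) i (hPdeg ▸ hi)
    rw [hφ i hi] at this
    exact (Complex.continuous_re.tendsto' 0 0 rfl).comp this
  exact (PiLp.continuous_toLp 2 _).tendsto' 0 0 rfl |>.comp (tendsto_pi_nhds.2 hcoord)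

/-- Lemma 3, after Song–Wang 2017.
Let `n ≥ 2`, `m ≥ 1`, and let `λ₁, …, λ_{n−1}` (here `lam 0, …, lam (n-2)`) be such
that `z^{n−1} + λ_{n−1}z^{n−2} + ⋯ + λ₂z + λ₁` is Hurwitz (every complex root has
negative real part).  Let `e : [0,∞) → ℝ^m` be `(n−1)`-times continuously
differentiable and let
`s(t) = λ₁e(t) + λ₂e′(t) + ⋯ + λ_{n−1}e^{(n−2)}(t) + e^{(n−1)}(t)`.
If `s(t) → 0` as `t → ∞`, then `e^{(i)}(t) → 0` as `t → ∞` for every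
`i = 0, 1, …, n−1`. -/
theorem filtered_error_convergence
    (n m : ℕ) (hn : 2 ≤ n) (hm : 1 ≤ m)
    (lam : Fin (n - 1) → ℝ)
    (hHurwitz : ∀ z : ℂ,
        z ^ (n - 1) + ∑ j : Fin (n - 1), (lam j : ℂ) * z ^ (j : ℕ) = 0 → z.re < 0)
    (e : ℝ → EuclideanSpace ℝ (Fin m))
    (he : ContDiff ℝ (n - 1 : ℕ) e)
    (s : ℝ → EuclideanSpace ℝ (Fin m))
    (hs_def : ∀ t, s t =
        (∑ j : Fin (n - 1), lam j • iteratedDeriv (j : ℕ) e t) + iteratedDeriv (n - 1) e t)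
    (hs_lim : Tendsto s atTop (nhds 0)) :
    ∀ i ≤ n - 1, Tendsto (iteratedDeriv i e) atTop (nhds 0) :=
  filtered_error_convergence_general n m lam hHurwitz e he s hs_def hs_lim
end
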